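/- arXiv:2603.28754 — 2 statements merged into one kernel-verified Lean document; each statement's English description precedes it below -/
import Mathlib

section
/- Let p₁,…,p_r ∈ ℝ be pairwise distinct, let R₁,…,R_r ∈ ℝ^{q×m}, let D ∈ ℝ^{q×m}, and set n = Σ_k rank(R_k). Then there exist a diagonal matrix A ∈ ℝ^{n×n} whose diagonal entries all belong to {p₁,…,p_r}, and real matrices B ∈ ℝ^{n×m}, C ∈ ℝ^{q×n}, such that (A,B,C,D) is a realization of the transfer function K = Σ_k (X − p_k)⁻¹·R_k + D (entrywise over RatFunc ℝ). -/
open Matrix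

set_option synthInstance.maxHeartbeats 400000

/-- `(A,B,C,D)` is a realization (with state dimension `n`) of the `q × m`
transfer function `K` over `RatFunc ℝ`. -/
def IsRealizationReal {n m q : ℕ} (K : Matrix (Fin q) (Fin m) (RatFunc ℝ))
    (A : Matrix (Fin n) (Fin n) ℝ) (B : Matrix (Fin n) (Fin m) ℝ)
    (C : Matrix (Fin q) (Fin n) ℝ) (D : Matrix (Fin q) (Fin m) ℝ) : Prop :=
  K = C.map (algebraMap ℝ (RatFunc ℝ)) *
      ((RatFunc.X : RatFunc ℝ) • (1 : Matrix (Fin n) (Fin n) (RatFunc ℝ)) -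
        A.map (algebraMap ℝ (RatFunc ℝ)))⁻¹ *
      B.map (algebraMap ℝ (RatFunc ℝ)) + D.map (algebraMap ℝ (RatFunc ℝ))

private lemma exists_rank_factorization {q m : ℕ} (M : Matrix (Fin q) (Fin m) ℝ) :
    ∃ (C : Matrix (Fin q) (Fin M.rank) ℝ) (B : Matrix (Fin M.rank) (Fin m) ℝ), M = C * B := by
  classical
  set f : (Fin m → ℝ) →ₗ[ℝ] (Fin q → ℝ) := Matrix.toLin' M with hf
  set V : Submodule ℝ (Fin q → ℝ) := LinearMap.range f with hV
  have hfr : Module.finrank ℝ V = M.rank := by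
    rw [Matrix.rank, ← Matrix.toLin'_apply']
  let b : Module.Basis (Fin M.rank) ℝ V := Module.finBasisOfFinrankEq ℝ V hfr
  let g : (Fin M.rank → ℝ) →ₗ[ℝ] (Fin q → ℝ) := V.subtype ∘ₗ (b.equivFun.symm : (Fin M.rank → ℝ) ≃ₗ[ℝ] V).toLinearMap
  let h : (Fin m → ℝ) →ₗ[ℝ] (Fin M.rank → ℝ) := (b.equivFun : V ≃ₗ[ℝ] (Fin M.rank → ℝ)).toLinearMap ∘ₗ f.rangeRestrict
  have hgh : g ∘ₗ h = f := by
    apply LinearMap.ext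
    intro x
    simp only [g, h, LinearMap.comp_apply, LinearEquiv.coe_coe,
      LinearEquiv.symm_apply_apply]
    rfl
  refine ⟨LinearMap.toMatrix' g, LinearMap.toMatrix' h, ?_⟩
  rw [← LinearMap.toMatrix'_comp, hgh, hf, LinearMap.toMatrix'_toLin']

/-- Existence of a real modal realization: for pairwise distinct real poles `p k` with
real residue matrices `R k` and real feedthrough `D`, the transfer function
`K = ∑ k (X − p k)⁻¹ R k + D` admits a real realization of state dimension
`n = ∑ k rank (R k)` with diagonal `A` whose diagonal entries are among the `p k`. -/
theorem real_modal_realization_exists {r m q : ℕ}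
    (p : Fin r → ℝ) (hp : Function.Injective p)
    (R : Fin r → Matrix (Fin q) (Fin m) ℝ) (D : Matrix (Fin q) (Fin m) ℝ) :
    ∃ (A : Matrix (Fin (∑ k, (R k).rank)) (Fin (∑ k, (R k).rank)) ℝ)
      (B : Matrix (Fin (∑ k, (R k).rank)) (Fin m) ℝ)
      (C : Matrix (Fin q) (Fin (∑ k, (R k).rank)) ℝ),
      (∀ i j, i ≠ j → A i j = 0) ∧
      (∀ i, ∃ k, A i i = p k) ∧
      IsRealizationReal
        ((∑ k, (RatFunc.X - RatFunc.C (p k))⁻¹ • (R k).map (algebraMap ℝ (RatFunc ℝ))) +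
          D.map (algebraMap ℝ (RatFunc ℝ))) A B C D := by
  classical
  choose Cf Bf hCB using fun k => exists_rank_factorization (R k)
  set n := ∑ k, (R k).rank with hn
  let e : (Σ k : Fin r, Fin ((R k).rank)) ≃ Fin n :=
    Fintype.equivFinOfCardEq (by simp [hn])
  set φ := algebraMap ℝ (RatFunc ℝ) with hφ
  refine ⟨Matrix.diagonal (fun i => p (e.symm i).1),
    Matrix.of (fun i j => Bf (e.symm i).1 (e.symm i).2 j),
    Matrix.of (fun a i => Cf (e.symm i).1 a (e.symm i).2), ?_, ?_, ?_⟩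
  · intro i j hij
    exact Matrix.diagonal_apply_ne _ hij
  · intro i
    exact ⟨(e.symm i).1, Matrix.diagonal_apply_eq _ i⟩
  · unfold IsRealizationReal
    set d : Fin n → RatFunc ℝ := fun i => RatFunc.X - RatFunc.C (p (e.symm i).1) with hd
    have h1 : ((RatFunc.X : RatFunc ℝ) • (1 : Matrix (Fin n) (Fin n) (RatFunc ℝ)) -
        (Matrix.diagonal (fun i => p (e.symm i).1)).map φ) = Matrix.diagonal d := by
      ext i j
      by_cases h : i = j
      · subst h
        simp [d, Matrix.map_apply, hφ, RatFunc.algebraMap_eq_C, Matrix.one_apply]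
      · simp [Matrix.map_apply, Matrix.one_apply, Matrix.diagonal_apply_ne _ h, h]
    rw [h1]
    have hdne : ∀ i, d i ≠ 0 := by
      intro i
      have : (Polynomial.X - Polynomial.C (p (e.symm i).1) : Polynomial ℝ) ≠ 0 :=
        Polynomial.X_sub_C_ne_zero _
      have h0 := RatFunc.algebraMap_ne_zero this
      rwa [map_sub, RatFunc.algebraMap_X, RatFunc.algebraMap_C] at h0
    have h2 : (Matrix.diagonal d)⁻¹ = Matrix.diagonal (fun i => (d i)⁻¹) := by
      apply Matrix.inv_eq_right_inv
      rw [Matrix.diagonal_mul_diagonal]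
      convert Matrix.diagonal_one with i
      exact mul_inv_cancel₀ (hdne i)
    rw [h2]
    ext a b
    simp only [Matrix.add_apply, Matrix.sum_apply, Matrix.smul_apply, smul_eq_mul]
    congr 1
    rw [Matrix.mul_apply]
    have h3 : ∀ i, ((Matrix.of (fun a i => Cf (e.symm i).1 a (e.symm i).2)).map φ *
        Matrix.diagonal (fun i => (d i)⁻¹)) a i = φ (Cf (e.symm i).1 a (e.symm i).2) * (d i)⁻¹ := by
      intro i
      rw [Matrix.mul_diagonal]
      rfl
    rw [← hφ]
    simp only [h3]
    have h4 : ∀ i : Fin n, φ (Cf (e.symm i).1 a (e.symm i).2) * (d i)⁻¹ *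
        ((Matrix.of (fun i j => Bf (e.symm i).1 (e.symm i).2 j)).map φ) i b =
        (fun s : Σ k : Fin r, Fin ((R k).rank) =>
          (RatFunc.X - RatFunc.C (p s.1))⁻¹ * (φ (Cf s.1 a s.2) * φ (Bf s.1 s.2 b))) (e.symm i) := by
      intro i
      simp only [Matrix.map_apply, Matrix.of_apply, hd]
      ring
    simp only [h4]
    have h5 := Fintype.sum_equiv e.symm
      (fun x : Fin n => (RatFunc.X - RatFunc.C (p (e.symm x).1))⁻¹ *
        (φ (Cf (e.symm x).1 a (e.symm x).2) * φ (Bf (e.symm x).1 (e.symm x).2 b)))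
      (fun s : Σ k : Fin r, Fin ((R k).rank) => (RatFunc.X - RatFunc.C (p s.1))⁻¹ *
        (φ (Cf s.1 a s.2) * φ (Bf s.1 s.2 b)))
      (fun x => rfl)
    rw [h5, ← Finset.univ_sigma_univ, Finset.sum_sigma]
    refine Finset.sum_congr rfl fun k _ => ?_
    dsimp only
    rw [← Finset.mul_sum]
    congr 1
    have hRkab : R k a b = (Cf k * Bf k) a b := by rw [← hCB k]
    rw [Matrix.map_apply, hRkab, Matrix.mul_apply, map_sum]
    simp [_root_.map_mul]
end

section
/- Let K be a q×m transfer function with a minimal (controllable and observable) realization (A_p,B_p,C_p,D_p) of state dimension n, and let S be a support of dimensions (n,m,q). Then there exists a realization of K with state dimension n satisfying S if and only if there exist a permutation matrix T_p ∈ ℂ^{n×n} and a matrix T_a ∈ ℂ^{n×n} that is a finite product of transvections I + x·δ_{ij} (i ≠ j, x ∈ ℂ) such that, setting T = T_a·T_p, the realization (T A_p T⁻¹, T B_p, C_p T⁻¹, D_p) satisfies S. -/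
open Matrix Polynomial
open scoped Multiplicative
open scoped WithZero

set_option synthInstance.maxHeartbeats 400000
set_option maxHeartbeats 1000000

/-- `(A,B,C,D)` is a realization (with state dimension `n`) of the `q × m`
transfer function `K` over `RatFunc ℂ`. -/
def IsRealization {n m q : ℕ} (K : Matrix (Fin q) (Fin m) (RatFunc ℂ))
    (A : Matrix (Fin n) (Fin n) ℂ) (B : Matrix (Fin n) (Fin m) ℂ)
    (C : Matrix (Fin q) (Fin n) ℂ) (D : Matrix (Fin q) (Fin m) ℂ) : Prop :=
  K = C.map (algebraMap ℂ (RatFunc ℂ)) *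
      ((RatFunc.X : RatFunc ℂ) • (1 : Matrix (Fin n) (Fin n) (RatFunc ℂ)) -
        A.map (algebraMap ℂ (RatFunc ℂ)))⁻¹ *
      B.map (algebraMap ℂ (RatFunc ℂ)) + D.map (algebraMap ℂ (RatFunc ℂ))

/-- `(A,B)` is controllable: the block matrix `[B, AB, …, A^{n-1}B]` has rank `n`. -/
def Controllable {n m : ℕ} (A : Matrix (Fin n) (Fin n) ℂ)
    (B : Matrix (Fin n) (Fin m) ℂ) : Prop :=
  (Matrix.of fun (i : Fin n) (p : Fin n × Fin m) => (A ^ (p.1 : ℕ) * B) i p.2).rank = n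

/-- `(C,A)` is observable: the block matrix with block rows `C, CA, …, CA^{n-1}` has rank `n`. -/
def Observable {n q : ℕ} (C : Matrix (Fin q) (Fin n) ℂ)
    (A : Matrix (Fin n) (Fin n) ℂ) : Prop :=
  (Matrix.of fun (p : Fin n × Fin q) (j : Fin n) => (C * A ^ (p.1 : ℕ)) p.2 j).rank = n

/-- `(A,B,C,D)` satisfies the support `(SA,SB,SC,SD)` (entries in `{0,1}` encoded by `Bool`). -/
def SatisfiesSupport {n m q : ℕ}
    (SA : Matrix (Fin n) (Fin n) Bool) (SB : Matrix (Fin n) (Fin m) Bool)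
    (SC : Matrix (Fin q) (Fin n) Bool) (SD : Matrix (Fin q) (Fin m) Bool)
    (A : Matrix (Fin n) (Fin n) ℂ) (B : Matrix (Fin n) (Fin m) ℂ)
    (C : Matrix (Fin q) (Fin n) ℂ) (D : Matrix (Fin q) (Fin m) ℂ) : Prop :=
  (∀ i j, SA i j = false → A i j = 0) ∧
  (∀ i j, SB i j = false → B i j = 0) ∧
  (∀ i j, SC i j = false → C i j = 0) ∧
  (∀ i j, SD i j = false → D i j = 0)

/-- `P` is a permutation matrix. -/
def IsPermMatrix {n : ℕ} (P : Matrix (Fin n) (Fin n) ℂ) : Prop :=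
  ∃ σ : Equiv.Perm (Fin n), P = σ.permMatrix ℂ

/-- `T` is a finite product of elementary addition matrices (transvections)
`I + x·δ i j` with `i ≠ j`. -/
def IsTransvectionProduct {n : ℕ} (T : Matrix (Fin n) (Fin n) ℂ) : Prop :=
  ∃ L : List (Matrix (Fin n) (Fin n) ℂ),
    (∀ M ∈ L, ∃ (i j : Fin n) (x : ℂ), i ≠ j ∧
      M = 1 + Matrix.single i j x) ∧
    T = L.prod

noncomputable instance : DecidableEq (RatFunc ℂ) := Classical.decEq _

noncomputable def vv : Valuation (RatFunc ℂ) ℤᵐ⁰ := FunctionField.inftyValuation ℂ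

noncomputable def ee (k : ℤ) : ℤᵐ⁰ := (Multiplicative.ofAdd k : Multiplicative ℤ)

lemma ee_mono {a b : ℤ} (h : a ≤ b) : ee a ≤ ee b := by
  simp [ee, WithZero.coe_le_coe, Multiplicative.ofAdd_le, h]

lemma ee_zero : ee 0 = 1 := by simp [ee]

lemma ee_add (a b : ℤ) : ee (a + b) = ee a * ee b := by
  simp [ee, ← WithZero.coe_mul, ← ofAdd_add]

lemma ee_neg_one_lt_one : ee (-1) < 1 := by
  rw [← ee_zero]
  rw [ee, ee, WithZero.coe_lt_coe]
  exact Multiplicative.ofAdd_lt.mpr (by norm_num)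

lemma vv_le_one (c : ℂ) : vv (algebraMap ℂ (RatFunc ℂ) c) ≤ 1 := by
  rcases eq_or_ne c 0 with h | h
  · simp [h]
  · rw [RatFunc.algebraMap_eq_C]
    show RatFunc.inftyValuation ℂ _ ≤ 1
    rw [FunctionField.inftyValuation.C ℂ h]

lemma vv_eq_one {c : ℂ} (h : c ≠ 0) : vv (algebraMap ℂ (RatFunc ℂ) c) = 1 := by
  rw [RatFunc.algebraMap_eq_C]
  show RatFunc.inftyValuation ℂ _ = 1
  rw [FunctionField.inftyValuation.C ℂ h]

lemma vv_X : vv (RatFunc.X) = ee 1 := FunctionField.inftyValuation.X ℂ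

lemma vv_const_eq_zero {c : ℂ} (h : vv (algebraMap ℂ (RatFunc ℂ) c) < 1) : c = 0 := by
  by_contra hc
  rw [vv_eq_one hc] at h
  exact lt_irrefl _ h

lemma vv_le_intDegree (f : RatFunc ℂ) : vv f ≤ ee f.intDegree := by
  rcases eq_or_ne f 0 with h | h
  · simp [h]
  · show RatFunc.inftyValuationDef ℂ _ ≤ _
    rw [RatFunc.inftyValuation_of_nonzero ℂ h]
    exact le_refl _
noncomputable abbrev φc : ℂ →+* RatFunc ℂ := (algebraMap ℂ (RatFunc ℂ))

lemma charmatrix_map_ratfunc {n : ℕ} (A : Matrix (Fin n) (Fin n) ℂ) :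
    (charmatrix A).map (algebraMap ℂ[X] (RatFunc ℂ)) =
      (RatFunc.X : RatFunc ℂ) • (1 : Matrix (Fin n) (Fin n) (RatFunc ℂ)) - A.map φc := by
  ext i j
  by_cases h : i = j
  · subst h
    simp [charmatrix_apply_eq, RatFunc.algebraMap_X, RatFunc.algebraMap_C]
  · simp [charmatrix_apply_ne _ _ _ h, Matrix.one_apply_ne h, RatFunc.algebraMap_C]

lemma det_xsub_ne_zero {n : ℕ} (A : Matrix (Fin n) (Fin n) ℂ) :
    IsUnit ((RatFunc.X : RatFunc ℂ) • (1 : Matrix (Fin n) (Fin n) (RatFunc ℂ)) - A.map φc).det := by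
  rw [← charmatrix_map_ratfunc]
  have : (A.charmatrix.map (algebraMap ℂ[X] (RatFunc ℂ))).det
      = algebraMap ℂ[X] (RatFunc ℂ) A.charmatrix.det := by
    exact (RingHom.map_det (algebraMap ℂ[X] (RatFunc ℂ)) A.charmatrix).symm
  rw [this, isUnit_iff_ne_zero, Ne, FaithfulSMul.algebraMap_eq_zero_iff]
  exact (Matrix.charpoly_monic A).ne_zero
section InvBound
variable {n : ℕ} (A : Matrix (Fin n) (Fin n) ℂ)

noncomputable def dmat : Matrix (Fin n) (Fin n) (RatFunc ℂ) :=
  (RatFunc.X : RatFunc ℂ) • (1 : Matrix (Fin n) (Fin n) (RatFunc ℂ)) - A.map φc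

lemma dmat_mul_inv : dmat A * (dmat A)⁻¹ = 1 :=
  Matrix.mul_nonsing_inv _ (det_xsub_ne_zero A)

lemma dmat_inv_mul : (dmat A)⁻¹ * dmat A = 1 :=
  Matrix.nonsing_inv_mul _ (det_xsub_ne_zero A)

lemma dmat_rec : (RatFunc.X : RatFunc ℂ) • (dmat A)⁻¹ = 1 + A.map φc * (dmat A)⁻¹ := by
  have h := dmat_mul_inv A
  rw [dmat] at h ⊢
  rw [Matrix.sub_mul, Matrix.smul_mul, Matrix.one_mul] at h
  exact eq_add_of_sub_eq h

lemma dmat_rec_entry (i j : Fin n) :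
    (RatFunc.X : RatFunc ℂ) * (dmat A)⁻¹ i j =
      (1 : Matrix (Fin n) (Fin n) (RatFunc ℂ)) i j + ∑ a, φc (A i a) * (dmat A)⁻¹ a j := by
  have h := congrFun (congrFun (dmat_rec A) i) j
  simpa [Matrix.smul_apply, Matrix.add_apply, Matrix.mul_apply, Matrix.map_apply] using h

lemma dmat_inv_step {k : ℤ} (hk : 0 ≤ k)
    (h : ∀ i j, vv ((dmat A)⁻¹ i j) ≤ ee k) (i j : Fin n) :
    vv ((dmat A)⁻¹ i j) ≤ ee (k - 1) := by
  have key : vv ((RatFunc.X : RatFunc ℂ) * (dmat A)⁻¹ i j) ≤ ee k := by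
    rw [dmat_rec_entry]
    apply Valuation.map_add_le
    · rcases eq_or_ne i j with rfl | hij
      · simpa [Matrix.one_apply_eq] using (le_trans (le_of_eq (map_one vv)) (by
          rw [← ee_zero]; exact ee_mono hk))
      · simp [Matrix.one_apply_ne hij]
    · apply Valuation.map_sum_le
      intro a _
      rw [_root_.map_mul]
      calc vv (φc (A i a)) * vv ((dmat A)⁻¹ a j) ≤ 1 * ee k :=
            mul_le_mul' (vv_le_one _) (h a j)
        _ = ee k := one_mul _
  rw [_root_.map_mul, vv_X] at key
  have : vv ((dmat A)⁻¹ i j) = ee (-1) * (ee 1 * vv ((dmat A)⁻¹ i j)) := by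
    rw [← mul_assoc, ← ee_add]
    norm_num [ee_zero]
  rw [this]
  calc ee (-1) * (ee 1 * vv ((dmat A)⁻¹ i j)) ≤ ee (-1) * ee k := mul_le_mul_right key _
    _ = ee (k - 1) := by rw [← ee_add]; ring_nf

lemma dmat_inv_bound (i j : Fin n) : vv ((dmat A)⁻¹ i j) ≤ ee (-1) := by
  classical
  set k : ℕ := Finset.univ.sup (fun p : Fin n × Fin n => ((dmat A)⁻¹ p.1 p.2).intDegree.toNat) with hk
  have hbase : ∀ i j, vv ((dmat A)⁻¹ i j) ≤ ee k := by
    intro i j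
    calc vv ((dmat A)⁻¹ i j) ≤ ee (((dmat A)⁻¹ i j).intDegree) := vv_le_intDegree _
      _ ≤ ee k := by
          apply ee_mono
          calc ((dmat A)⁻¹ i j).intDegree ≤ (((dmat A)⁻¹ i j).intDegree.toNat : ℤ) :=
                Int.self_le_toNat _
            _ ≤ (k : ℤ) := by
                exact_mod_cast Nat.cast_le.mpr (Finset.le_sup (f := fun p : Fin n × Fin n =>
                  ((dmat A)⁻¹ p.1 p.2).intDegree.toNat) (Finset.mem_univ (i, j)))
  have main : ∀ t : ℕ, ∀ i j, vv ((dmat A)⁻¹ i j) ≤ ee (max ((k : ℤ) - t) (-1)) := by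
    intro t
    induction t with
    | zero =>
      intro i j
      calc vv ((dmat A)⁻¹ i j) ≤ ee k := hbase i j
        _ ≤ ee (max ((k : ℤ) - 0) (-1)) := ee_mono (by simp)
    | succ t ih =>
      rcases le_or_gt ((k : ℤ) - t) (-1) with hle | hgt
      · intro i j
        calc vv ((dmat A)⁻¹ i j) ≤ ee (max ((k : ℤ) - t) (-1)) := ih i j
          _ = ee (-1) := by rw [max_eq_right hle]
          _ ≤ ee (max ((k : ℤ) - (t+1)) (-1)) := ee_mono (le_max_right _ _)
      · have h0 : (0 : ℤ) ≤ (k : ℤ) - t := by omega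
        have ih' : ∀ i j, vv ((dmat A)⁻¹ i j) ≤ ee ((k : ℤ) - t) := by
          intro i j
          calc vv ((dmat A)⁻¹ i j) ≤ ee (max ((k : ℤ) - t) (-1)) := ih i j
            _ = ee ((k : ℤ) - t) := by rw [max_eq_left (by omega)]
        intro i j
        calc vv ((dmat A)⁻¹ i j) ≤ ee ((k : ℤ) - t - 1) := dmat_inv_step A h0 ih' i j
          _ ≤ ee (max ((k : ℤ) - (t+1)) (-1)) := ee_mono (by
              rw [le_max_iff]; left; omega)
  have := main (k + 1) i j
  calc vv ((dmat A)⁻¹ i j) ≤ ee (max ((k : ℤ) - (k+1)) (-1)) := this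
    _ = ee (-1) := by
        congr 1
        rw [max_eq_right (by omega)]

end InvBound

section Markov

variable {n m q : ℕ}

lemma entry_mul_bound {a b c : ℕ} (P : Matrix (Fin a) (Fin b) (RatFunc ℂ))
    (Q : Matrix (Fin b) (Fin c) (RatFunc ℂ)) {x y : ℤᵐ⁰}
    (hP : ∀ i j, vv (P i j) ≤ x) (hQ : ∀ i j, vv (Q i j) ≤ y) :
    ∀ i j, vv ((P * Q) i j) ≤ x * y := by
  intro i j
  rw [Matrix.mul_apply]
  apply Valuation.map_sum_le
  intro t _
  rw [_root_.map_mul]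
  exact mul_le_mul' (hP i t) (hQ t j)

noncomputable def Gmat (A : Matrix (Fin n) (Fin n) ℂ) (B : Matrix (Fin n) (Fin m) ℂ)
    (C : Matrix (Fin q) (Fin n) ℂ) (k : ℕ) : Matrix (Fin q) (Fin m) (RatFunc ℂ) :=
  (C * A ^ k).map φc * (dmat A)⁻¹ * B.map φc

lemma Gmat_bound (A : Matrix (Fin n) (Fin n) ℂ) (B : Matrix (Fin n) (Fin m) ℂ)
    (C : Matrix (Fin q) (Fin n) ℂ) (k : ℕ) (i : Fin q) (j : Fin m) :
    vv (Gmat A B C k i j) ≤ ee (-1) := by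
  have h1 : ∀ i j, vv (((C * A ^ k).map φc * (dmat A)⁻¹) i j) ≤ 1 * ee (-1) :=
    entry_mul_bound _ _ (fun i j => vv_le_one _) (dmat_inv_bound A)
  have h2 := entry_mul_bound _ _ h1 (fun (i : Fin n) (j : Fin m) => vv_le_one (B i j)) i j
  calc vv (Gmat A B C k i j) ≤ 1 * ee (-1) * 1 := h2
    _ = ee (-1) := by rw [one_mul, mul_one]

lemma Gmat_rec (A : Matrix (Fin n) (Fin n) ℂ) (B : Matrix (Fin n) (Fin m) ℂ)
    (C : Matrix (Fin q) (Fin n) ℂ) (k : ℕ) :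
    (RatFunc.X : RatFunc ℂ) • Gmat A B C k = (C * A ^ k * B).map φc + Gmat A B C (k + 1) := by
  have : (RatFunc.X : RatFunc ℂ) • Gmat A B C k
      = (C * A ^ k).map φc * ((RatFunc.X : RatFunc ℂ) • (dmat A)⁻¹) * B.map φc := by
    rw [Gmat, Matrix.mul_smul, Matrix.smul_mul]
  rw [this, dmat_rec, Matrix.mul_add, Matrix.mul_one, Matrix.add_mul]
  congr 1
  · rw [← Matrix.map_mul]
  · rw [Gmat, ← Matrix.mul_assoc, ← Matrix.map_mul, pow_succ, ← Matrix.mul_assoc]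

lemma sp_entry_eq {x y : ℂ} (h : vv (φc x - φc y) < 1) : x = y := by
  have : φc (x - y) = φc x - φc y := by rw [map_sub]
  have h2 : vv (φc (x - y)) < 1 := by rw [this]; exact h
  have := vv_const_eq_zero h2
  exact sub_eq_zero.mp this

lemma realization_markov {K : Matrix (Fin q) (Fin m) (RatFunc ℂ)}
    {A : Matrix (Fin n) (Fin n) ℂ} {B : Matrix (Fin n) (Fin m) ℂ}
    {C : Matrix (Fin q) (Fin n) ℂ} {D : Matrix (Fin q) (Fin m) ℂ}
    {Ap : Matrix (Fin n) (Fin n) ℂ} {Bp : Matrix (Fin n) (Fin m) ℂ}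
    {Cp : Matrix (Fin q) (Fin n) ℂ} {Dp : Matrix (Fin q) (Fin m) ℂ}
    (h : IsRealization K A B C D) (hp : IsRealization K Ap Bp Cp Dp) :
    D = Dp ∧ ∀ k : ℕ, C * A ^ k * B = Cp * Ap ^ k * Bp := by
  have heq : Gmat A B C 0 + D.map φc = Gmat Ap Bp Cp 0 + Dp.map φc := by
    have h' := h
    have hp' := hp
    rw [IsRealization] at h' hp'
    have : Gmat A B C 0 = C.map φc * ((RatFunc.X : RatFunc ℂ) • 1 - A.map φc)⁻¹ * B.map φc := by
      rw [Gmat, pow_zero, Matrix.mul_one, dmat]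
    rw [this]
    have : Gmat Ap Bp Cp 0
        = Cp.map φc * ((RatFunc.X : RatFunc ℂ) • 1 - Ap.map φc)⁻¹ * Bp.map φc := by
      rw [Gmat, pow_zero, Matrix.mul_one, dmat]
    rw [this, ← h', ← hp']
  -- D = Dp
  have hD : D = Dp := by
    ext i j
    apply sp_entry_eq
    have e := congrFun (congrFun heq i) j
    simp only [Matrix.add_apply, Matrix.map_apply] at e
    have e2 : φc (D i j) - φc (Dp i j) = Gmat Ap Bp Cp 0 i j - Gmat A B C 0 i j := by
      linear_combination e
    rw [e2]
    calc vv (Gmat Ap Bp Cp 0 i j - Gmat A B C 0 i j)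
        ≤ max (vv (Gmat Ap Bp Cp 0 i j)) (vv (Gmat A B C 0 i j)) := Valuation.map_sub _ _ _
      _ ≤ ee (-1) := max_le (Gmat_bound _ _ _ _ _ _) (Gmat_bound _ _ _ _ _ _)
      _ < 1 := ee_neg_one_lt_one
  have hG0 : Gmat A B C 0 = Gmat Ap Bp Cp 0 := by
    have := heq
    rw [hD] at this
    exact add_right_cancel this
  -- induction
  have step : ∀ k : ℕ, Gmat A B C k = Gmat Ap Bp Cp k →
      C * A ^ k * B = Cp * Ap ^ k * Bp ∧ Gmat A B C (k+1) = Gmat Ap Bp Cp (k+1) := by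
    intro k ih
    have e : (C * A ^ k * B).map φc + Gmat A B C (k+1)
        = (Cp * Ap ^ k * Bp).map φc + Gmat Ap Bp Cp (k+1) := by
      rw [← Gmat_rec, ← Gmat_rec, ih]
    have hE : ∀ i j, φc ((C * A ^ k * B) i j) - φc ((Cp * Ap ^ k * Bp) i j)
        = Gmat Ap Bp Cp (k+1) i j - Gmat A B C (k+1) i j := by
      intro i j
      have e' := congrFun (congrFun e i) j
      simp only [Matrix.add_apply, Matrix.map_apply] at e'
      linear_combination e'
    have hfirst : C * A ^ k * B = Cp * Ap ^ k * Bp := by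
      ext i j
      apply sp_entry_eq
      rw [hE i j]
      calc vv (Gmat Ap Bp Cp (k+1) i j - Gmat A B C (k+1) i j)
          ≤ max (vv (Gmat Ap Bp Cp (k+1) i j)) (vv (Gmat A B C (k+1) i j)) :=
            Valuation.map_sub _ _ _
        _ ≤ ee (-1) := max_le (Gmat_bound _ _ _ _ _ _) (Gmat_bound _ _ _ _ _ _)
        _ < 1 := ee_neg_one_lt_one
    refine ⟨hfirst, ?_⟩
    rw [hfirst] at e
    exact add_left_cancel e
  have main : ∀ k : ℕ, Gmat A B C k = Gmat Ap Bp Cp k := by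
    intro k
    induction k with
    | zero => exact hG0
    | succ k ih => exact (step k ih).2
  exact ⟨hD, fun k => (step k (main k)).1⟩

end Markov

section LinAlg

lemma exists_left_inv {l : Type*} [Fintype l] [DecidableEq l] {r : ℕ}
    (M : Matrix l (Fin r) ℂ) (h : M.rank = r) : ∃ N : Matrix (Fin r) l ℂ, N * M = 1 := by
  have hker : LinearMap.ker M.mulVecLin = ⊥ := by
    have h1 := LinearMap.finrank_range_add_finrank_ker M.mulVecLin
    rw [Module.finrank_pi, Fintype.card_fin] at h1
    have h2 : Module.finrank ℂ (LinearMap.range M.mulVecLin) = r := h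
    rw [h2] at h1
    have : Module.finrank ℂ (LinearMap.ker M.mulVecLin) = 0 := by omega
    exact Submodule.finrank_eq_zero.mp this
  obtain ⟨g, hg⟩ := (Matrix.toLin' M).exists_leftInverse_of_injective (by
    rw [Matrix.toLin'_apply']; exact hker)
  refine ⟨LinearMap.toMatrix' g, ?_⟩
  have : LinearMap.toMatrix' (g.comp (Matrix.toLin' M)) = LinearMap.toMatrix' g * M := by
    rw [LinearMap.toMatrix'_comp, LinearMap.toMatrix'_toLin']
  rw [← this, hg, LinearMap.toMatrix'_id]

lemma exists_right_inv {l : Type*} [Fintype l] [DecidableEq l] {r : ℕ}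
    (M : Matrix (Fin r) l ℂ) (h : M.rank = r) : ∃ N : Matrix l (Fin r) ℂ, M * N = 1 := by
  have hrange : LinearMap.range M.mulVecLin = ⊤ := by
    apply Submodule.eq_top_of_finrank_eq
    rw [Module.finrank_pi, Fintype.card_fin]
    exact h
  obtain ⟨g, hg⟩ := (Matrix.toLin' M).exists_rightInverse_of_surjective (by
    rw [Matrix.toLin'_apply']; exact hrange)
  refine ⟨LinearMap.toMatrix' g, ?_⟩
  have : LinearMap.toMatrix' ((Matrix.toLin' M).comp g) = M * LinearMap.toMatrix' g := by
    rw [LinearMap.toMatrix'_comp, LinearMap.toMatrix'_toLin']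
  rw [← this, hg, LinearMap.toMatrix'_id]

end LinAlg

section Similarity

variable {n m q : ℕ}

noncomputable def ObsM (C : Matrix (Fin q) (Fin n) ℂ) (A : Matrix (Fin n) (Fin n) ℂ) :
    Matrix (Fin n × Fin q) (Fin n) ℂ :=
  Matrix.of fun (p : Fin n × Fin q) (j : Fin n) => (C * A ^ (p.1 : ℕ)) p.2 j

noncomputable def CtrM (A : Matrix (Fin n) (Fin n) ℂ) (B : Matrix (Fin n) (Fin m) ℂ) :
    Matrix (Fin n) (Fin n × Fin m) ℂ :=
  Matrix.of fun (i : Fin n) (p : Fin n × Fin m) => (A ^ (p.1 : ℕ) * B) i p.2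

lemma obs_mul_ctr (C : Matrix (Fin q) (Fin n) ℂ) (A : Matrix (Fin n) (Fin n) ℂ)
    (B : Matrix (Fin n) (Fin m) ℂ) (p : Fin n × Fin q) (p' : Fin n × Fin m) :
    (ObsM C A * CtrM A B) p p' = (C * A ^ ((p.1 : ℕ) + (p'.1 : ℕ)) * B) p.2 p'.2 := by
  rw [Matrix.mul_apply]
  have : C * A ^ ((p.1 : ℕ) + (p'.1 : ℕ)) * B = (C * A ^ (p.1 : ℕ)) * (A ^ (p'.1 : ℕ) * B) := by
    rw [pow_add]
    simp only [Matrix.mul_assoc]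
  rw [this, Matrix.mul_apply]
  simp [ObsM, CtrM]

lemma obs_mul_mul_ctr (C : Matrix (Fin q) (Fin n) ℂ) (A : Matrix (Fin n) (Fin n) ℂ)
    (B : Matrix (Fin n) (Fin m) ℂ) (p : Fin n × Fin q) (p' : Fin n × Fin m) :
    (ObsM C A * (A * CtrM A B)) p p' =
      (C * A ^ ((p.1 : ℕ) + 1 + (p'.1 : ℕ)) * B) p.2 p'.2 := by
  rw [Matrix.mul_apply]
  have key : C * A ^ ((p.1 : ℕ) + 1 + (p'.1 : ℕ)) * B
      = (C * A ^ (p.1 : ℕ)) * (A * (A ^ (p'.1 : ℕ) * B)) := by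
    have : (p.1 : ℕ) + 1 + (p'.1 : ℕ) = (p.1 : ℕ) + (1 + (p'.1 : ℕ)) := by omega
    rw [this, pow_add, pow_add, pow_one]
    simp only [Matrix.mul_assoc]
  have inner : ∀ c, (A * CtrM A B) c p' = (A * (A ^ (p'.1 : ℕ) * B)) c p'.2 := by
    intro c
    rw [Matrix.mul_apply, Matrix.mul_apply]
    apply Finset.sum_congr rfl
    intro e _
    simp [CtrM]
  calc (ObsM C A * (A * CtrM A B)) p p'
      = ∑ j, ObsM C A p j * (A * CtrM A B) j p' := Matrix.mul_apply
    _ = ∑ j, (C * A ^ (p.1 : ℕ)) p.2 j * (A * (A ^ (p'.1 : ℕ) * B)) j p'.2 :=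
        Finset.sum_congr rfl (fun c _ => by rw [inner c]; simp [ObsM])
    _ = ((C * A ^ (p.1 : ℕ)) * (A * (A ^ (p'.1 : ℕ) * B))) p.2 p'.2 := (Matrix.mul_apply).symm
    _ = (C * A ^ ((p.1 : ℕ) + 1 + (p'.1 : ℕ)) * B) p.2 p'.2 := by rw [← key]

lemma exists_similarity (hn : 0 < n)
    (A : Matrix (Fin n) (Fin n) ℂ) (B : Matrix (Fin n) (Fin m) ℂ) (C : Matrix (Fin q) (Fin n) ℂ)
    (Ap : Matrix (Fin n) (Fin n) ℂ) (Bp : Matrix (Fin n) (Fin m) ℂ)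
    (Cp : Matrix (Fin q) (Fin n) ℂ)
    (hcon : Controllable Ap Bp) (hobs : Observable Cp Ap)
    (hmk : ∀ k : ℕ, C * A ^ k * B = Cp * Ap ^ k * Bp) :
    ∃ T : Matrix (Fin n) (Fin n) ℂ,
      IsUnit T.det ∧ T * Bp = B ∧ C * T = Cp ∧ A * T = T * Ap := by
  classical
  set O := ObsM C A with hO
  set R := CtrM A B with hR
  set Op := ObsM Cp Ap with hOp
  set Rp := CtrM Ap Bp with hRp
  have hrankRp : Rp.rank = n := hcon
  have hrankOp : Op.rank = n := hobs
  have hOR : O * R = Op * Rp := by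
    ext p p'
    rw [obs_mul_ctr, obs_mul_ctr, hmk]
  have hOAR : O * (A * R) = Op * (Ap * Rp) := by
    ext p p'
    rw [obs_mul_mul_ctr, obs_mul_mul_ctr, hmk]
  obtain ⟨Rw, hRw⟩ := exists_right_inv Rp hrankRp
  -- rank facts
  have hrankOpRp : (Op * Rp).rank = n := by
    apply le_antisymm
    · calc (Op * Rp).rank ≤ Op.rank := Matrix.rank_mul_le_left _ _
        _ = n := hrankOp
    · calc n = Op.rank := hrankOp.symm
        _ = ((Op * Rp) * Rw).rank := by rw [Matrix.mul_assoc, hRw, Matrix.mul_one]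
        _ ≤ (Op * Rp).rank := Matrix.rank_mul_le_left _ _
  have hrankO : O.rank = n := by
    apply le_antisymm
    · calc O.rank ≤ Fintype.card (Fin n) := Matrix.rank_le_card_width O
        _ = n := Fintype.card_fin n
    · calc n = (Op * Rp).rank := hrankOpRp.symm
        _ = (O * R).rank := by rw [hOR]
        _ ≤ O.rank := Matrix.rank_mul_le_left _ _
  have hrankR : R.rank = n := by
    apply le_antisymm
    · calc R.rank ≤ Fintype.card (Fin n) := Matrix.rank_le_card_height R
        _ = n := Fintype.card_fin n
    · calc n = (Op * Rp).rank := hrankOpRp.symm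
        _ = (O * R).rank := by rw [hOR]
        _ ≤ R.rank := Matrix.rank_mul_le_right _ _
  obtain ⟨Ov, hOv⟩ := exists_left_inv O hrankO
  set T := Ov * Op with hT
  have hTRp : T * Rp = R := by
    calc Ov * Op * Rp = Ov * (Op * Rp) := by rw [Matrix.mul_assoc]
      _ = Ov * (O * R) := by rw [hOR]
      _ = (Ov * O) * R := by rw [Matrix.mul_assoc]
      _ = R := by rw [hOv, Matrix.one_mul]
  have hOpOR : Op = O * (R * Rw) := by
    calc Op = Op * (1 : Matrix (Fin n) (Fin n) ℂ) := by rw [Matrix.mul_one]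
      _ = Op * (Rp * Rw) := by rw [hRw]
      _ = (Op * Rp) * Rw := by rw [Matrix.mul_assoc]
      _ = (O * R) * Rw := by rw [hOR]
      _ = O * (R * Rw) := by rw [Matrix.mul_assoc]
  have hT2 : T = R * Rw := by
    calc T = Ov * Op := hT
      _ = Ov * (O * (R * Rw)) := by rw [← hOpOR]
      _ = (Ov * O) * (R * Rw) := by rw [Matrix.mul_assoc]
      _ = R * Rw := by rw [hOv, Matrix.one_mul]
  have hOT : O * T = Op := by rw [hT2]; exact hOpOR.symm
  have hAT : A * T = T * Ap := by
    have h1 : O * ((A * T) * Rp) = O * ((T * Ap) * Rp) := by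
      calc O * ((A * T) * Rp) = O * (A * (T * Rp)) := by rw [Matrix.mul_assoc A]
        _ = O * (A * R) := by rw [hTRp]
        _ = Op * (Ap * Rp) := hOAR
        _ = (O * T) * (Ap * Rp) := by rw [hOT]
        _ = O * (T * (Ap * Rp)) := by rw [Matrix.mul_assoc]
        _ = O * ((T * Ap) * Rp) := by rw [Matrix.mul_assoc T]
    have h2 : (A * T) * Rp = (T * Ap) * Rp := by
      calc (A * T) * Rp = (1 : Matrix (Fin n) (Fin n) ℂ) * ((A * T) * Rp) := by rw [Matrix.one_mul]
        _ = (Ov * O) * ((A * T) * Rp) := by rw [hOv]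
        _ = Ov * (O * ((A * T) * Rp)) := by rw [Matrix.mul_assoc]
        _ = Ov * (O * ((T * Ap) * Rp)) := by rw [h1]
        _ = (Ov * O) * ((T * Ap) * Rp) := (Matrix.mul_assoc Ov O _).symm
        _ = (T * Ap) * Rp := by rw [hOv, Matrix.one_mul]
    calc A * T = ((A * T) * Rp) * Rw := by rw [Matrix.mul_assoc, hRw, Matrix.mul_one]
      _ = ((T * Ap) * Rp) * Rw := by rw [h2]
      _ = T * Ap := by rw [Matrix.mul_assoc, hRw, Matrix.mul_one]
  have hrankT : T.rank = n := by
    apply le_antisymm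
    · calc T.rank ≤ Fintype.card (Fin n) := Matrix.rank_le_card_width T
        _ = n := Fintype.card_fin n
    · calc n = R.rank := hrankR.symm
        _ = (T * Rp).rank := by rw [hTRp]
        _ ≤ T.rank := Matrix.rank_mul_le_left _ _
  obtain ⟨U, hU⟩ := exists_right_inv T hrankT
  have hdetT : IsUnit T.det := Matrix.isUnit_det_of_right_inverse hU
  -- extract B and C relations
  have hTB : T * Bp = B := by
    ext a b
    have h := congrFun (congrFun hTRp a) ((⟨0, hn⟩ : Fin n), b)
    rw [Matrix.mul_apply] at h
    simp only [hRp, hR, CtrM, Matrix.of_apply, pow_zero, Matrix.one_mul] at h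
    rw [Matrix.mul_apply]
    simpa using h
  have hCT : C * T = Cp := by
    ext a j
    have h := congrFun (congrFun hOT ((⟨0, hn⟩ : Fin n), a)) j
    rw [Matrix.mul_apply] at h
    simp only [hO, hOp, ObsM, Matrix.of_apply, pow_zero, Matrix.mul_one] at h
    rw [Matrix.mul_apply]
    simpa using h
  exact ⟨T, hdetT, hTB, hCT, hAT⟩

end Similarity

section Transvections

variable {n : ℕ}

lemma ITP_one : IsTransvectionProduct (1 : Matrix (Fin n) (Fin n) ℂ) :=
  ⟨[], by simp, by simp⟩

lemma ITP_mul {P Q : Matrix (Fin n) (Fin n) ℂ} (hP : IsTransvectionProduct P)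
    (hQ : IsTransvectionProduct Q) : IsTransvectionProduct (P * Q) := by
  obtain ⟨L, hL, rfl⟩ := hP
  obtain ⟨L', hL', rfl⟩ := hQ
  exact ⟨L ++ L', by
    intro M hM
    rcases List.mem_append.mp hM with h | h
    exacts [hL M h, hL' M h], by rw [List.prod_append]⟩

lemma ITP_det {P : Matrix (Fin n) (Fin n) ℂ} (hP : IsTransvectionProduct P) : P.det = 1 := by
  obtain ⟨L, hL, rfl⟩ := hP
  induction L with
  | nil => simp
  | cons M t ih =>
    rw [List.prod_cons, Matrix.det_mul]
    obtain ⟨i, j, x, hij, rfl⟩ := hL M (List.mem_cons_self)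
    have : (1 + Matrix.single i j x) = Matrix.transvection i j x := rfl
    rw [this, Matrix.det_transvection_of_ne i j hij x, one_mul]
    exact ih (fun M hM => hL M (List.mem_cons_of_mem _ hM))

lemma diag_conj_transvection {d : Fin n → ℂ} (hd : ∀ i, d i ≠ 0) {i j : Fin n} (hij : i ≠ j)
    (x : ℂ) :
    Matrix.diagonal (fun t => (d t)⁻¹) * (1 + Matrix.single i j x) * Matrix.diagonal d
      = 1 + Matrix.single i j ((d i)⁻¹ * x * d j) := by
  ext a b
  rw [Matrix.mul_diagonal, Matrix.diagonal_mul]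
  rcases eq_or_ne a b with rfl | hab
  · have h1 : Matrix.single i j x a a = 0 :=
      Matrix.single_apply_of_ne _ _ _ _ _ (by rintro ⟨rfl, rfl⟩; exact hij rfl)
    have h2 : Matrix.single i j ((d i)⁻¹ * x * d j) a a = 0 :=
      Matrix.single_apply_of_ne _ _ _ _ _ (by rintro ⟨rfl, rfl⟩; exact hij rfl)
    simp [Matrix.add_apply, h1, h2, Matrix.one_apply_eq, inv_mul_cancel₀ (hd a)]
  · rcases eq_or_ne (a, b) (i, j) with he | hne
    · obtain ⟨rfl, rfl⟩ : a = i ∧ b = j := Prod.mk_inj.mp he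
      simp [Matrix.add_apply, Matrix.one_apply_ne hab]
    · have h1 : Matrix.single i j x a b = 0 :=
        Matrix.single_apply_of_ne _ _ _ _ _ (by
          rintro ⟨rfl, rfl⟩; exact hne rfl)
      have h2 : Matrix.single i j ((d i)⁻¹ * x * d j) a b = 0 :=
        Matrix.single_apply_of_ne _ _ _ _ _ (by
          rintro ⟨rfl, rfl⟩; exact hne rfl)
      simp [Matrix.add_apply, h1, h2, Matrix.one_apply_ne hab]

lemma ITP_diag_conj {d : Fin n → ℂ} (hd : ∀ i, d i ≠ 0) {P : Matrix (Fin n) (Fin n) ℂ}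
    (hP : IsTransvectionProduct P) :
    IsTransvectionProduct (Matrix.diagonal (fun t => (d t)⁻¹) * P * Matrix.diagonal d) := by
  obtain ⟨L, hL, rfl⟩ := hP
  induction L with
  | nil =>
    simp only [List.prod_nil, Matrix.mul_one]
    have : Matrix.diagonal (fun t => (d t)⁻¹) * Matrix.diagonal d
        = (1 : Matrix (Fin n) (Fin n) ℂ) := by
      rw [Matrix.diagonal_mul_diagonal]
      have hfun : (fun t => (d t)⁻¹ * d t) = fun _ => (1 : ℂ) := funext fun t => inv_mul_cancel₀ (hd t)
      rw [hfun, Matrix.diagonal_one]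
    rw [this]
    exact ITP_one
  | cons M t ih =>
    have hM := hL M (List.mem_cons_self)
    obtain ⟨i, j, x, hij, rfl⟩ := hM
    have ht := ih (fun M hM => hL M (List.mem_cons_of_mem _ hM))
    have hdd : Matrix.diagonal d * Matrix.diagonal (fun t => (d t)⁻¹)
        = (1 : Matrix (Fin n) (Fin n) ℂ) := by
      rw [Matrix.diagonal_mul_diagonal]
      have hfun : (fun t => d t * (d t)⁻¹) = fun _ => (1 : ℂ) := funext fun t => mul_inv_cancel₀ (hd t)
      rw [hfun, Matrix.diagonal_one]
    have key : Matrix.diagonal (fun t => (d t)⁻¹) * ((1 + Matrix.single i j x) :: t).prod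
          * Matrix.diagonal d
        = (Matrix.diagonal (fun t => (d t)⁻¹) * (1 + Matrix.single i j x)
            * Matrix.diagonal d)
          * (Matrix.diagonal (fun t => (d t)⁻¹) * t.prod * Matrix.diagonal d) := by
      rw [List.prod_cons]
      calc Matrix.diagonal (fun t => (d t)⁻¹) * ((1 + Matrix.single i j x) * t.prod)
            * Matrix.diagonal d
          = Matrix.diagonal (fun t => (d t)⁻¹) * ((1 + Matrix.single i j x)
              * (Matrix.diagonal d * (Matrix.diagonal (fun t => (d t)⁻¹) * t.prod))
              * Matrix.diagonal d) := by
            rw [← Matrix.mul_assoc (Matrix.diagonal d), hdd, Matrix.one_mul]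
            simp only [Matrix.mul_assoc]
        _ = _ := by simp only [Matrix.mul_assoc]
    rw [key]
    rw [diag_conj_transvection hd hij x]
    apply ITP_mul _ ht
    exact ⟨[1 + Matrix.single i j ((d i)⁻¹ * x * d j)],
      by
        intro M hM
        rw [List.mem_singleton] at hM
        exact ⟨i, j, _, hij, hM⟩,
      by simp⟩

lemma exists_diag_transvection_factor {T : Matrix (Fin n) (Fin n) ℂ} (h : IsUnit T.det) :
    ∃ (d : Fin n → ℂ) (Ta : Matrix (Fin n) (Fin n) ℂ),
      (∀ i, d i ≠ 0) ∧ IsTransvectionProduct Ta ∧ T = Matrix.diagonal d * Ta := by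
  obtain ⟨L, L', D, hdec⟩ := Matrix.Pivot.exists_list_transvec_mul_diagonal_mul_list_transvec T
  have hPitp : IsTransvectionProduct (L.map Matrix.TransvectionStruct.toMatrix).prod := by
    refine ⟨L.map Matrix.TransvectionStruct.toMatrix, ?_, rfl⟩
    intro M hM
    rw [List.mem_map] at hM
    obtain ⟨t, _, rfl⟩ := hM
    exact ⟨t.i, t.j, t.c, t.hij, rfl⟩
  have hQitp : IsTransvectionProduct (L'.map Matrix.TransvectionStruct.toMatrix).prod := by
    refine ⟨L'.map Matrix.TransvectionStruct.toMatrix, ?_, rfl⟩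
    intro M hM
    rw [List.mem_map] at hM
    obtain ⟨t, _, rfl⟩ := hM
    exact ⟨t.i, t.j, t.c, t.hij, rfl⟩
  set P := (L.map Matrix.TransvectionStruct.toMatrix).prod
  set Q := (L'.map Matrix.TransvectionStruct.toMatrix).prod
  have hDnz : ∀ i, D i ≠ 0 := by
    have hdet : T.det = P.det * (Matrix.diagonal D).det * Q.det := by
      rw [hdec, Matrix.det_mul, Matrix.det_mul]
    rw [ITP_det hPitp, ITP_det hQitp, Matrix.det_diagonal, one_mul, mul_one] at hdet
    intro i hi
    rw [isUnit_iff_ne_zero, hdet] at h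
    exact h (Finset.prod_eq_zero (Finset.mem_univ i) hi)
  refine ⟨D, (Matrix.diagonal (fun t => (D t)⁻¹) * P * Matrix.diagonal D) * Q,
    hDnz, ITP_mul (ITP_diag_conj hDnz hPitp) hQitp, ?_⟩
  have hDD : Matrix.diagonal D * Matrix.diagonal (fun t => (D t)⁻¹)
      = (1 : Matrix (Fin n) (Fin n) ℂ) := by
    rw [Matrix.diagonal_mul_diagonal]
    have hfun : (fun t => D t * (D t)⁻¹) = fun _ => (1 : ℂ) := funext fun t => mul_inv_cancel₀ (hDnz t)
    rw [hfun, Matrix.diagonal_one]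
  calc T = P * Matrix.diagonal D * Q := hdec
    _ = (Matrix.diagonal D * Matrix.diagonal (fun t => (D t)⁻¹)) * P * Matrix.diagonal D * Q := by
        rw [hDD, Matrix.one_mul]
    _ = Matrix.diagonal D * ((Matrix.diagonal (fun t => (D t)⁻¹) * P * Matrix.diagonal D) * Q) := by
        simp only [Matrix.mul_assoc]

end Transvections

section Backward

variable {n m q : ℕ}

lemma map_mul_c {a b c : ℕ} (M : Matrix (Fin a) (Fin b) ℂ) (N : Matrix (Fin b) (Fin c) ℂ) :
    (M * N).map φc = M.map φc * N.map φc :=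
  Matrix.map_mul

lemma map_one_c : ((1 : Matrix (Fin n) (Fin n) ℂ)).map φc = 1 :=
  Matrix.map_one _ (map_zero φc) (map_one φc)

lemma realization_similar {K : Matrix (Fin q) (Fin m) (RatFunc ℂ)}
    {Ap : Matrix (Fin n) (Fin n) ℂ} {Bp : Matrix (Fin n) (Fin m) ℂ}
    {Cp : Matrix (Fin q) (Fin n) ℂ} {Dp : Matrix (Fin q) (Fin m) ℂ}
    (hR : IsRealization K Ap Bp Cp Dp) (T : Matrix (Fin n) (Fin n) ℂ) (hT : IsUnit T.det) :
    IsRealization K (T * Ap * T⁻¹) (T * Bp) (Cp * T⁻¹) Dp := by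
  have hTT : T * T⁻¹ = 1 := Matrix.mul_nonsing_inv T hT
  have hTT' : T⁻¹ * T = 1 := Matrix.nonsing_inv_mul T hT
  set U := T.map φc with hU
  set V := (T⁻¹).map φc with hV
  have hUV : U * V = 1 := by rw [hU, hV, ← map_mul_c, hTT, map_one_c]
  have hVU : V * U = 1 := by rw [hU, hV, ← map_mul_c, hTT', map_one_c]
  have hdmat : (RatFunc.X : RatFunc ℂ) • (1 : Matrix (Fin n) (Fin n) (RatFunc ℂ))
      - (T * Ap * T⁻¹).map φc = U * (dmat Ap) * V := by
    rw [dmat, Matrix.mul_sub, Matrix.sub_mul]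
    congr 1
    · rw [Matrix.mul_smul, Matrix.mul_one, Matrix.smul_mul, hUV]
    · rw [map_mul_c, map_mul_c]
  have hinv : ((RatFunc.X : RatFunc ℂ) • (1 : Matrix (Fin n) (Fin n) (RatFunc ℂ))
      - (T * Ap * T⁻¹).map φc)⁻¹ = U * (dmat Ap)⁻¹ * V := by
    rw [hdmat]
    apply Matrix.inv_eq_right_inv
    calc U * dmat Ap * V * (U * (dmat Ap)⁻¹ * V)
        = U * dmat Ap * (V * U) * ((dmat Ap)⁻¹ * V) := by simp only [Matrix.mul_assoc]
      _ = U * (dmat Ap * (dmat Ap)⁻¹) * V := by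
          rw [hVU, Matrix.mul_one]; simp only [Matrix.mul_assoc]
      _ = U * V := by rw [dmat_mul_inv, Matrix.mul_one]
      _ = 1 := hUV
  rw [IsRealization, hinv]
  have : (Cp * T⁻¹).map φc * (U * (dmat Ap)⁻¹ * V) * ((T * Bp).map φc)
      = Cp.map φc * (dmat Ap)⁻¹ * Bp.map φc := by
    rw [map_mul_c, map_mul_c]
    calc Cp.map φc * V * (U * (dmat Ap)⁻¹ * V) * (U * Bp.map φc)
        = Cp.map φc * ((V * U) * ((dmat Ap)⁻¹ * ((V * U) * Bp.map φc))) := by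
          simp only [Matrix.mul_assoc]
      _ = Cp.map φc * ((dmat Ap)⁻¹ * Bp.map φc) := by rw [hVU, Matrix.one_mul, Matrix.one_mul]
      _ = Cp.map φc * (dmat Ap)⁻¹ * Bp.map φc := by rw [Matrix.mul_assoc]
  rw [this]
  have hd : (dmat Ap)⁻¹ = ((RatFunc.X : RatFunc ℂ) • (1 : Matrix (Fin n) (Fin n) (RatFunc ℂ))
      - Ap.map φc)⁻¹ := by rw [dmat]
  rw [hd] at *
  exact hR

lemma permMatrix_refl : (Equiv.Perm.permMatrix ℂ (1 : Equiv.Perm (Fin n))) = 1 := by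
  ext i j
  simp [Equiv.Perm.permMatrix, PEquiv.toMatrix, Equiv.toPEquiv, Matrix.one_apply]

end Backward

/-- Given a minimal realization `(Ap,Bp,Cp,Dp)` of `K`, a realization of `K` of state
dimension `n` satisfying the support exists iff there are a permutation matrix `Tp` and
a product of transvections `Ta` with, for `T = Ta * Tp`, the realization
`(T Ap T⁻¹, T Bp, Cp T⁻¹, Dp)` satisfying the support. -/
theorem realizable_iff_exists_perm_transvections {n m q : ℕ}
    (K : Matrix (Fin q) (Fin m) (RatFunc ℂ))
    (Ap : Matrix (Fin n) (Fin n) ℂ) (Bp : Matrix (Fin n) (Fin m) ℂ)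
    (Cp : Matrix (Fin q) (Fin n) ℂ) (Dp : Matrix (Fin q) (Fin m) ℂ)
    (hR : IsRealization K Ap Bp Cp Dp)
    (hcon : Controllable Ap Bp) (hobs : Observable Cp Ap)
    (SA : Matrix (Fin n) (Fin n) Bool) (SB : Matrix (Fin n) (Fin m) Bool)
    (SC : Matrix (Fin q) (Fin n) Bool) (SD : Matrix (Fin q) (Fin m) Bool) :
    (∃ (A : Matrix (Fin n) (Fin n) ℂ) (B : Matrix (Fin n) (Fin m) ℂ)
       (C : Matrix (Fin q) (Fin n) ℂ) (D : Matrix (Fin q) (Fin m) ℂ),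
       IsRealization K A B C D ∧ SatisfiesSupport SA SB SC SD A B C D) ↔
    (∃ Tp Ta : Matrix (Fin n) (Fin n) ℂ,
       IsPermMatrix Tp ∧ IsTransvectionProduct Ta ∧
       SatisfiesSupport SA SB SC SD
         ((Ta * Tp) * Ap * (Ta * Tp)⁻¹) ((Ta * Tp) * Bp) (Cp * (Ta * Tp)⁻¹) Dp) := by
  constructor
  · rintro ⟨A, B, C, D, hreal, hsupp⟩
    obtain ⟨hD, hmk⟩ := realization_markov hreal hR
    rcases Nat.eq_zero_or_pos n with hn0 | hn
    · subst hn0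
      refine ⟨1, 1, ⟨1, _root_.permMatrix_refl.symm⟩, ITP_one, ?_, ?_, ?_, ?_⟩
      · intro i j _; exact i.elim0
      · intro i j _; exact i.elim0
      · intro i j _; exact j.elim0
      · intro i j hf
        rw [← hD]
        exact hsupp.2.2.2 i j hf
    · obtain ⟨T, hdet, hTB, hCT, hAT⟩ := exists_similarity hn A B C Ap Bp Cp hcon hobs hmk
      have hTT : T * T⁻¹ = 1 := Matrix.mul_nonsing_inv T hdet
      have hA : T * Ap * T⁻¹ = A := by
        rw [← hAT, Matrix.mul_assoc, hTT, Matrix.mul_one]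
      have hC : Cp * T⁻¹ = C := by rw [← hCT, Matrix.mul_assoc, hTT, Matrix.mul_one]
      obtain ⟨d, Ta, hdnz, hITP, hfact⟩ := exists_diag_transvection_factor hdet
      have hdinv_d : Matrix.diagonal (fun t => (d t)⁻¹) * Matrix.diagonal d
          = (1 : Matrix (Fin n) (Fin n) ℂ) := by
        rw [Matrix.diagonal_mul_diagonal]
        have hfun : (fun t => (d t)⁻¹ * d t) = fun _ => (1 : ℂ) :=
          funext fun t => inv_mul_cancel₀ (hdnz t)
        rw [hfun, Matrix.diagonal_one]
      have hTa : Ta = Matrix.diagonal (fun t => (d t)⁻¹) * T := by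
        rw [hfact, ← Matrix.mul_assoc, hdinv_d, Matrix.one_mul]
      have hTainv : Ta⁻¹ = T⁻¹ * Matrix.diagonal d := by
        apply Matrix.inv_eq_right_inv
        rw [hTa]
        calc Matrix.diagonal (fun t => (d t)⁻¹) * T * (T⁻¹ * Matrix.diagonal d)
            = Matrix.diagonal (fun t => (d t)⁻¹) * (T * T⁻¹) * Matrix.diagonal d := by
              simp only [Matrix.mul_assoc]
          _ = Matrix.diagonal (fun t => (d t)⁻¹) * Matrix.diagonal d := by
              rw [hTT, Matrix.mul_one]
          _ = 1 := hdinv_d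
      have hAA : Ta * Ap * Ta⁻¹ = Matrix.diagonal (fun t => (d t)⁻¹) * A * Matrix.diagonal d := by
        rw [hTainv, hTa, ← hA]
        simp only [Matrix.mul_assoc]
      have hBB : Ta * Bp = Matrix.diagonal (fun t => (d t)⁻¹) * B := by
        rw [hTa, Matrix.mul_assoc, hTB]
      have hCC : Cp * Ta⁻¹ = C * Matrix.diagonal d := by
        rw [hTainv, ← hC, Matrix.mul_assoc]
      refine ⟨1, Ta, ⟨1, _root_.permMatrix_refl.symm⟩, hITP, ?_, ?_, ?_, ?_⟩
      · intro i j hf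
        simp only [Matrix.mul_one]
        rw [hAA, Matrix.mul_diagonal, Matrix.diagonal_mul, hsupp.1 i j hf,
          mul_zero, zero_mul]
      · intro i j hf
        simp only [Matrix.mul_one]
        rw [hBB, Matrix.diagonal_mul, hsupp.2.1 i j hf, mul_zero]
      · intro i j hf
        simp only [Matrix.mul_one]
        rw [hCC, Matrix.mul_diagonal, hsupp.2.2.1 i j hf, zero_mul]
      · intro i j hf
        rw [← hD]
        exact hsupp.2.2.2 i j hf
  · rintro ⟨Tp, Ta, ⟨σ, rfl⟩, hITP, hsupp⟩
    have hdet : IsUnit (Ta * σ.permMatrix ℂ).det := by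
      rw [Matrix.det_mul, ITP_det hITP, one_mul, Matrix.det_permutation]
      rcases Int.units_eq_one_or (Equiv.Perm.sign σ) with h | h <;> rw [h] <;> simp
    exact ⟨(Ta * σ.permMatrix ℂ) * Ap * (Ta * σ.permMatrix ℂ)⁻¹, (Ta * σ.permMatrix ℂ) * Bp,
      Cp * (Ta * σ.permMatrix ℂ)⁻¹, Dp, realization_similar hR _ hdet, hsupp⟩
end
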